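/- arXiv:2212.03685 — 7 statements merged into one kernel-verified Lean document; each statement's English description precedes it below -/
import Mathlib

section
/- Let f : [0,D]² → ℝ≥0 have maximum value z* = max f. Let T be the volume-based quadtree of f with volume threshold ρ > 0 (a node is subdivided iff the volume of f over its region exceeds ρ). Then every leaf cell v of T has side length s(v) > (1/2)·√(ρ/z*). -/
open MeasureTheory

/-! The parent of a leaf, of side `2s`, was subdivided, so `ρ < ∫ f ≤ z* (2s)²` over it;
solving for `s` gives the bound. -/

section

open Set

theorem volume_real_Icc_add_square (a : ℝ × ℝ) {t : ℝ} (ht : 0 ≤ t) :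
    volume.real (Icc a (a + (t, t))) = t ^ 2 := by
  rw [Icc_prod_eq, Measure.volume_eq_prod, measureReal_prod_prod, Real.volume_real_Icc_of_le,
    Real.volume_real_Icc_of_le] <;> simp [ht, sq]

theorem setIntegral_Icc_add_square_le (f : ℝ × ℝ → ℝ) (a : ℝ × ℝ) {t z : ℝ} (ht : 0 ≤ t)
    (hf : ∀ p ∈ Icc a (a + (t, t)), |f p| ≤ z) :
    ∫ p in Icc a (a + (t, t)), f p ≤ z * t ^ 2 := by
  have hfin : volume (Icc a (a + (t, t))) < ⊤ := isCompact_Icc.measure_lt_top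
  calc ∫ p in Icc a (a + (t, t)), f p
      ≤ ‖∫ p in Icc a (a + (t, t)), f p‖ := Real.le_norm_self _
    _ ≤ z * volume.real (Icc a (a + (t, t))) := norm_setIntegral_le_of_norm_le_const hfin hf
    _ = z * t ^ 2 := by rw [volume_real_Icc_add_square a ht]

theorem sqrt_div_lt_of_lt_mul_sq {ρ z t : ℝ} (hz : 0 < z) (ht : 0 < t) (h : ρ < z * t ^ 2) :
    √(ρ / z) < t := by
  rw [Real.sqrt_lt' ht, div_lt_iff₀ hz]
  linarith

end

theorem volume_quadtree_leaf_side_length_general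
    (ρ zstar s : ℝ) (f : ℝ × ℝ → ℝ) (a : ℝ × ℝ)
    (hz : 0 < zstar)
    (hf0 : ∀ p, 0 ≤ f p) (hfz : ∀ p, f p ≤ zstar)
    (hs : 0 < s)
    (hparent : ρ < ∫ p in Set.Icc a (a + (2*s, 2*s)), f p) :
    s > (1/2) * Real.sqrt (ρ / zstar) := by
  have hvolume : ∫ p in Set.Icc a (a + (2*s, 2*s)), f p ≤ zstar * (2 * s) ^ 2 :=
    setIntegral_Icc_add_square_le f a (by linarith) fun p _ ↦
      (abs_of_nonneg (hf0 p)).trans_le (hfz p)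
  have hsqrt := sqrt_div_lt_of_lt_mul_sq hz (by linarith) (hparent.trans_le hvolume)
  linarith

/-- In a volume-based quadtree of `f : [0,D]² → ℝ≥0` with threshold `ρ`,
every leaf cell `v` has side length `s(v) > (1/2)·√(ρ/z*)`, where `z*` bounds `f`.
A leaf cell arises from subdividing its parent (side length `2·s`), whose volume exceeds `ρ`. -/
theorem volume_quadtree_leaf_side_length
    (D ρ zstar s : ℝ) (f : ℝ × ℝ → ℝ) (a : ℝ × ℝ)
    (hρ : 0 < ρ) (hz : 0 < zstar)
    (hf0 : ∀ p, 0 ≤ f p) (hfz : ∀ p, f p ≤ zstar)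
    (hzmax : zstar = ⨆ p ∈ Set.Icc ((0:ℝ), (0:ℝ)) (D, D), f p)
    (hsub : Set.Icc a (a + (2*s, 2*s)) ⊆ Set.Icc ((0:ℝ), (0:ℝ)) (D, D))
    (hs : 0 < s)
    (hparent : ρ < ∫ p in Set.Icc a (a + (2*s, 2*s)), f p) :
    s > (1/2) * Real.sqrt (ρ / zstar) :=
  volume_quadtree_leaf_side_length_general ρ zstar s f a hz hf0 hfz hs hparent
end

section
/- Let f : D → ℝ≥0 be λ-Lipschitz (with respect to the Euclidean norm on ℝ²), let R ⊆ D be an axis-aligned square of side length s, and suppose f(x,y) = z for some (x,y) ∈ R with z < √2·λ·s. Then the volume ∫_R f is at least z³/(6λ²). -/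
/-!
Since `f` is `λ`-Lipschitz with `f q = z`, it lies above the pyramid `z - c ‖p - q‖` of slope
`c = √2 λ ≥ λ`, whose base has half-width `h = z / c ≤ s`. Some `h × h` square containing `q` fits
in `R`, and as the pyramid decreases in `|x - q₁|` and in `|y - q₂|`, its integral over that
square is at least its integral `z h² - 2 c h³ / 3 = z³ / (6 λ²)` over the quarter base `[0, h]²`.
-/

open MeasureTheory Set

lemma integral_le_integral_abs_sub_of_antitoneOn {φ : ℝ → ℝ} (hφ : Continuous φ) {h l q : ℝ}
    (hanti : AntitoneOn φ (Icc 0 h)) (hlq : l ≤ q) (hql : q ≤ l + h) :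
    ∫ t in 0..h, φ t ≤ ∫ x in l..l + h, φ |x - q| := by
  have hφi : ∀ a b, IntervalIntegrable φ volume a b := fun a b => hφ.intervalIntegrable a b
  have hleft : ∫ x in l..q, φ |x - q| = ∫ t in 0..q - l, φ t := by
    rw [← sub_self q, ← intervalIntegral.integral_comp_sub_left]
    refine intervalIntegral.integral_congr fun x hx => ?_
    rw [uIcc_of_le hlq] at hx
    rw [abs_of_nonpos (by linarith [hx.2]), neg_sub]
  have hright : ∫ x in q..l + h, φ |x - q| = ∫ t in 0..l + h - q, φ t := by
    rw [← sub_self q, ← intervalIntegral.integral_comp_sub_right]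
    refine intervalIntegral.integral_congr fun x hx => ?_
    rw [uIcc_of_le hql] at hx
    rw [abs_of_nonneg (by linarith [hx.1])]
  -- the far end of `[0, h]` is dominated by the near end of the other side of `q`
  have htail : ∫ t in l + h - q..h, φ t ≤ ∫ t in 0..q - l, φ t := by
    have hshift := intervalIntegral.integral_comp_add_right φ (l + h - q) (a := 0) (b := q - l)
    rw [zero_add, show q - l + (l + h - q) = h by ring] at hshift
    rw [← hshift]
    refine intervalIntegral.integral_mono_on (by linarith)
      ((hφ.comp (continuous_add_const _)).intervalIntegrable _ _) (hφi _ _) fun x hx => ?_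
    exact hanti ⟨hx.1, by linarith [hx.2]⟩ ⟨by linarith [hx.1], by linarith [hx.2]⟩
      (by linarith)
  have hcont : Continuous fun x => φ |x - q| := by fun_prop
  rw [← intervalIntegral.integral_add_adjacent_intervals (hcont.intervalIntegrable l q)
      (hcont.intervalIntegrable q _), hleft, hright,
    ← intervalIntegral.integral_add_adjacent_intervals (hφi 0 (l + h - q)) (hφi _ h)]
  linarith

lemma setIntegral_Icc_prod_Icc_eq_integral_integral {F : ℝ × ℝ → ℝ} (hF : Continuous F)
    {l₁ r₁ l₂ r₂ : ℝ} (h₁ : l₁ ≤ r₁) (h₂ : l₂ ≤ r₂) :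
    ∫ p in Icc l₁ r₁ ×ˢ Icc l₂ r₂, F p = ∫ x in l₁..r₁, ∫ y in l₂..r₂, F (x, y) := by
  have hint : IntegrableOn F (Icc l₁ r₁ ×ˢ Icc l₂ r₂) (volume.prod volume) := by
    rw [← Measure.volume_eq_prod]
    exact hF.continuousOn.integrableOn_compact (isCompact_Icc.prod isCompact_Icc)
  rw [Measure.volume_eq_prod, setIntegral_prod F hint, intervalIntegral.integral_of_le h₁,
    ← integral_Icc_eq_integral_Ioc]
  refine setIntegral_congr_fun measurableSet_Icc fun x _ => ?_
  rw [intervalIntegral.integral_of_le h₂, integral_Icc_eq_integral_Ioc]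

lemma integral_integral_le_setIntegral_of_antitoneOn {ψ : ℝ → ℝ → ℝ}
    (hψ : Continuous (Function.uncurry ψ)) {h l₁ l₂ q₁ q₂ : ℝ}
    (hanti₁ : ∀ v, AntitoneOn (ψ · v) (Icc 0 h)) (hanti₂ : ∀ u, AntitoneOn (ψ u) (Icc 0 h))
    (hlq₁ : l₁ ≤ q₁) (hql₁ : q₁ ≤ l₁ + h) (hlq₂ : l₂ ≤ q₂) (hql₂ : q₂ ≤ l₂ + h) :
    ∫ u in 0..h, ∫ v in 0..h, ψ u v ≤
      ∫ p in Icc l₁ (l₁ + h) ×ˢ Icc l₂ (l₂ + h), ψ |p.1 - q₁| |p.2 - q₂| := by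
  have hh : 0 ≤ h := by linarith
  have hψ₂ : ∀ u, Continuous (ψ u) := fun u => hψ.comp (Continuous.prodMk_right u)
  have hK : Continuous fun u => ∫ v in 0..h, ψ u v :=
    intervalIntegral.continuous_parametric_intervalIntegral_of_continuous' hψ 0 h
  have hK' : Continuous fun x => ∫ y in l₂..l₂ + h, ψ |x - q₁| |y - q₂| :=
    intervalIntegral.continuous_parametric_intervalIntegral_of_continuous' (by fun_prop) _ _
  have hKanti : AntitoneOn (fun u => ∫ v in 0..h, ψ u v) (Icc 0 h) := fun u hu u' hu' huu' =>
    intervalIntegral.integral_mono_on hh ((hψ₂ u').intervalIntegrable _ _)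
      ((hψ₂ u).intervalIntegrable _ _) fun v _ => hanti₁ v hu hu' huu'
  calc ∫ u in 0..h, ∫ v in 0..h, ψ u v
      ≤ ∫ x in l₁..l₁ + h, ∫ v in 0..h, ψ |x - q₁| v :=
        integral_le_integral_abs_sub_of_antitoneOn hK hKanti hlq₁ hql₁
    _ ≤ ∫ x in l₁..l₁ + h, ∫ y in l₂..l₂ + h, ψ |x - q₁| |y - q₂| :=
        intervalIntegral.integral_mono_on (by linarith)
          ((hK.comp (continuous_abs.comp (continuous_sub_right q₁))).intervalIntegrable _ _)
          (hK'.intervalIntegrable _ _) fun x _ =>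
          integral_le_integral_abs_sub_of_antitoneOn (hψ₂ _) (hanti₂ _) hlq₂ hql₂
    _ = _ := (setIntegral_Icc_prod_Icc_eq_integral_integral
        (F := fun p => ψ |p.1 - q₁| |p.2 - q₂|) (by fun_prop) (by linarith) (by linarith)).symm

lemma integral_max_const_left {u h : ℝ} (hu : 0 ≤ u) (huh : u ≤ h) :
    ∫ v in 0..h, max u v = (h ^ 2 + u ^ 2) / 2 := by
  have hcont : Continuous fun v : ℝ => max u v := by fun_prop
  rw [← intervalIntegral.integral_add_adjacent_intervals (hcont.intervalIntegrable 0 u)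
      (hcont.intervalIntegrable u h),
    intervalIntegral.integral_congr (g := fun _ => u) fun v hv =>
      max_eq_left (uIcc_of_le hu ▸ hv).2,
    intervalIntegral.integral_congr (g := fun v => v) fun v hv =>
      max_eq_right (uIcc_of_le huh ▸ hv).1,
    intervalIntegral.integral_const, integral_id, smul_eq_mul]
  ring

lemma integral_integral_sub_mul_max (z c : ℝ) {h : ℝ} (hh : 0 ≤ h) :
    ∫ u in 0..h, ∫ v in 0..h, (z - c * max u v) = z * h ^ 2 - 2 * c * h ^ 3 / 3 := by
  have hinner : EqOn (fun u => ∫ v in 0..h, (z - c * max u v))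
      (fun u => z * h - c / 2 * h ^ 2 - c / 2 * u ^ 2) (uIcc 0 h) := fun u hu => by
    rw [uIcc_of_le hh] at hu
    dsimp only
    rw [intervalIntegral.integral_sub intervalIntegrable_const
        ((by fun_prop : Continuous fun v => c * max u v).intervalIntegrable _ _),
      intervalIntegral.integral_const, intervalIntegral.integral_const_mul,
      integral_max_const_left hu.1 hu.2, smul_eq_mul]
    ring
  rw [intervalIntegral.integral_congr hinner, intervalIntegral.integral_sub intervalIntegrable_const
      ((by fun_prop : Continuous fun u : ℝ => c / 2 * u ^ 2).intervalIntegrable _ _),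
    intervalIntegral.integral_const, intervalIntegral.integral_const_mul, integral_pow, smul_eq_mul]
  ring

lemma exists_Icc_subset_Icc_mem {a s q h : ℝ} (haq : a ≤ q) (hqs : q ≤ a + s) (hh : 0 ≤ h)
    (hhs : h ≤ s) : ∃ l, Icc l (l + h) ⊆ Icc a (a + s) ∧ l ≤ q ∧ q ≤ l + h :=
  ⟨max a (q - h), Icc_subset_Icc (le_max_left _ _)
      (le_sub_iff_add_le.mp (max_le (by linarith) (by linarith))),
    max_le haq (by linarith), by linarith [le_max_right a (q - h)]⟩

theorem volume_lower_bound_small_value_general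
    (lam s z : ℝ) (f : ℝ × ℝ → ℝ) (a q : ℝ × ℝ)
    (hlam : 0 < lam)
    (R : Set (ℝ × ℝ)) (hR : R = Set.Icc a (a + (s, s)))
    (hf0 : ∀ p ∈ R, 0 ≤ f p)
    (hlip : ∀ p ∈ R, ∀ p' ∈ R, |f p - f p'| ≤ lam * ‖p - p'‖)
    (hint : IntegrableOn f R)
    (hq : q ∈ R) (hz : f q = z)
    (hsmall : z < Real.sqrt 2 * lam * s) :
    z ^ 3 / (6 * lam ^ 2) ≤ ∫ p in R, f p := by
  set c := √2 * lam
  have hc : 0 < c := by positivity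
  have hlamc : lam ≤ c := le_mul_of_one_le_left hlam.le Real.one_lt_sqrt_two.le
  set h := z / c
  have hh : 0 ≤ h := div_nonneg (hz ▸ hf0 q hq) hc.le
  have hch : c * h = z := mul_div_cancel₀ z hc.ne'
  obtain ⟨⟨ha₁, ha₂⟩, hs₁, hs₂⟩ : (a.1 ≤ q.1 ∧ a.2 ≤ q.2) ∧ q.1 ≤ a.1 + s ∧ q.2 ≤ a.2 + s :=
    by subst hR; exact hq
  have hhs : h ≤ s := (div_le_iff₀' hc).2 hsmall.le
  obtain ⟨l₁, hl₁, hlq₁, hql₁⟩ := exists_Icc_subset_Icc_mem ha₁ hs₁ hh hhs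
  obtain ⟨l₂, hl₂, hlq₂, hql₂⟩ := exists_Icc_subset_Icc_mem ha₂ hs₂ hh hhs
  set B := Icc l₁ (l₁ + h) ×ˢ Icc l₂ (l₂ + h)
  have hBR : B ⊆ R := hR ▸ Icc_prod_eq a (a + (s, s)) ▸ prod_mono hl₁ hl₂
  -- the norm on `ℝ × ℝ` is the sup norm
  have hpyr : ∀ p ∈ B, z - c * max |p.1 - q.1| |p.2 - q.2| ≤ f p := fun p hp => by
    have hnorm : ‖p - q‖ = max |p.1 - q.1| |p.2 - q.2| := rfl
    have := (abs_le.mp (hlip p (hBR hp) q hq)).1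
    rw [hz, hnorm] at this
    have hM : 0 ≤ max |p.1 - q.1| |p.2 - q.2| := le_max_of_le_left (abs_nonneg _)
    linarith [mul_le_mul_of_nonneg_right hlamc hM]
  have hpyr_cont : Continuous fun p : ℝ × ℝ => z - c * max |p.1 - q.1| |p.2 - q.2| := by
    fun_prop
  calc z ^ 3 / (6 * lam ^ 2) = z * h ^ 2 - 2 * c * h ^ 3 / 3 := by
        rw [← hch]; field_simp; simp only [c, mul_pow, Real.sq_sqrt zero_le_two]; ring
    _ = ∫ u in 0..h, ∫ v in 0..h, (z - c * max u v) := (integral_integral_sub_mul_max z c hh).symm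
    _ ≤ ∫ p in B, (z - c * max |p.1 - q.1| |p.2 - q.2|) :=
        integral_integral_le_setIntegral_of_antitoneOn (by fun_prop)
          (fun v _ _ _ _ huu' => by dsimp only; gcongr) (fun u _ _ _ _ hvv' => by gcongr)
          hlq₁ hql₁ hlq₂ hql₂
    _ ≤ ∫ p in B, f p := setIntegral_mono_on
        (hpyr_cont.continuousOn.integrableOn_compact (isCompact_Icc.prod isCompact_Icc))
        (hint.mono_set hBR) (measurableSet_Icc.prod measurableSet_Icc) hpyr
    _ ≤ ∫ p in R, f p := setIntegral_mono_set hint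
        (ae_restrict_of_forall_mem (hR ▸ measurableSet_Icc) hf0) hBR.eventuallyLE

/-- If `f` is nonnegative and `λ`-Lipschitz on an axis-aligned square `R`
of side length `s`, and `f(x,y) = z` for some `(x,y) ∈ R` with `z < √2·λ·s`,
then `∫_R f ≥ z³/(6λ²)`. -/
theorem volume_lower_bound_small_value
    (lam s z : ℝ) (f : ℝ × ℝ → ℝ) (a q : ℝ × ℝ)
    (hlam : 0 < lam) (hs : 0 < s)
    (R : Set (ℝ × ℝ)) (hR : R = Set.Icc a (a + (s, s)))
    (hf0 : ∀ p ∈ R, 0 ≤ f p)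
    (hlip : ∀ p ∈ R, ∀ p' ∈ R, |f p - f p'| ≤ lam * ‖p - p'‖)
    (hint : IntegrableOn f R)
    (hq : q ∈ R) (hz : f q = z)
    (hsmall : z < Real.sqrt 2 * lam * s) :
    z ^ 3 / (6 * lam ^ 2) ≤ ∫ p in R, f p :=
  volume_lower_bound_small_value_general lam s z f a q hlam R hR hf0 hlip hint hq hz hsmall
end

section
/- Let f : D → ℝ≥0 be λ-Lipschitz, let R ⊆ D be an axis-aligned square of side length s, and suppose f(x,y) = z for some (x,y) ∈ R with z ≥ √2·λ·s. Then the volume ∫_R f is at least s²·(z - (2√2/3)·λ·s). -/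
/-!
Lipschitz continuity puts `f` above the cone `p ↦ z - λ‖p - q‖` on `R`. By AM-GM,
`‖v‖ ≤ (|v|² / s + s) / 2`, where `‖·‖` is the sup norm of `ℝ × ℝ` and `|·|` the
Euclidean one, and the mean of `|p - q|²` over a square of side `s` containing `q` is
at most `2 s² / 3` (attained at a corner). So the cone has mean at least
`z - (5/6) λ s ≥ z - (2√2/3) λ s` over `R`.
-/

open MeasureTheory Set

lemma setIntegral_Icc_sub_sq_le {l u m : ℝ} (hm : m ∈ Icc l u) :
    ∫ x in Icc l u, (x - m) ^ 2 ≤ (u - l) ^ 3 / 3 := by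
  rw [integral_Icc_eq_integral_Ioc, ← intervalIntegral.integral_of_le (hm.1.trans hm.2),
    intervalIntegral.integral_comp_sub_right (fun x => x ^ 2), integral_pow]
  have hl : 0 ≤ m - l := sub_nonneg.2 hm.1
  have hu : 0 ≤ u - m := sub_nonneg.2 hm.2
  nlinarith [mul_nonneg (mul_nonneg hl hu) (add_nonneg hl hu)]

lemma volume_real_Icc_prod {a b : ℝ × ℝ} (hab : a ≤ b) :
    volume.real (Icc a b) = (b.1 - a.1) * (b.2 - a.2) := by
  rw [Icc_prod_eq, Measure.volume_eq_prod, measureReal_prod_prod,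
    Real.volume_real_Icc_of_le hab.1, Real.volume_real_Icc_of_le hab.2]

lemma setIntegral_Icc_prod_sub_sq_add_sub_sq_le {a b q : ℝ × ℝ} (hq : q ∈ Icc a b) :
    ∫ p in Icc a b, ((p.1 - q.1) ^ 2 + (p.2 - q.2) ^ 2)
      ≤ ((b.1 - a.1) ^ 2 + (b.2 - a.2) ^ 2) / 3 * ((b.1 - a.1) * (b.2 - a.2)) := by
  have hab : a ≤ b := hq.1.trans hq.2
  have h1 := setIntegral_Icc_sub_sq_le ⟨hq.1.1, hq.2.1⟩
  have h2 := setIntegral_Icc_sub_sq_le ⟨hq.1.2, hq.2.2⟩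
  rw [integral_add (by fun_prop : Continuous fun p : ℝ × ℝ => (p.1 - q.1) ^ 2).integrableOn_Icc
      (by fun_prop : Continuous fun p : ℝ × ℝ => (p.2 - q.2) ^ 2).integrableOn_Icc,
    Icc_prod_eq, Measure.volume_eq_prod, ← Measure.prod_restrict,
    integral_fun_fst (fun x => (x - q.1) ^ 2), integral_fun_snd (fun y => (y - q.2) ^ 2)]
  simp only [measureReal_restrict_apply_univ, Real.volume_real_Icc_of_le hab.1,
    Real.volume_real_Icc_of_le hab.2, smul_eq_mul]
  have hd1 : 0 ≤ b.1 - a.1 := sub_nonneg.2 hab.1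
  have hd2 : 0 ≤ b.2 - a.2 := sub_nonneg.2 hab.2
  nlinarith [mul_le_mul_of_nonneg_left h1 hd2, mul_le_mul_of_nonneg_left h2 hd1]

lemma Prod.norm_sq_le_sq_add_sq (v : ℝ × ℝ) : ‖v‖ ^ 2 ≤ v.1 ^ 2 + v.2 ^ 2 := by
  rw [Prod.norm_def, Real.norm_eq_abs, Real.norm_eq_abs]
  rcases max_cases |v.1| |v.2| with ⟨h, _⟩ | ⟨h, _⟩ <;> rw [h, sq_abs] <;>
    nlinarith [sq_nonneg v.1, sq_nonneg v.2]

lemma setIntegral_Icc_norm_sub_le {a q : ℝ × ℝ} {s : ℝ} (hs : 0 < s)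
    (hq : q ∈ Icc a (a + (s, s))) :
    ∫ p in Icc a (a + (s, s)), ‖p - q‖ ≤ 5 / 6 * s ^ 3 := by
  have hpt : ∀ p : ℝ × ℝ,
      2 * s * ‖p - q‖ ≤ (p.1 - q.1) ^ 2 + (p.2 - q.2) ^ 2 + s ^ 2 := fun p => by
    have := Prod.norm_sq_le_sq_add_sq (p - q)
    rw [Prod.fst_sub, Prod.snd_sub] at this
    linarith [two_mul_le_add_sq s ‖p - q‖]
  have hsq := setIntegral_Icc_prod_sub_sq_add_sub_sq_le hq
  have hvol := volume_real_Icc_prod (hq.1.trans hq.2)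
  simp only [Prod.fst_add, Prod.snd_add, add_sub_cancel_left] at hsq hvol
  have hmono : ∫ p in Icc a (a + (s, s)), 2 * s * ‖p - q‖
      ≤ ∫ p in Icc a (a + (s, s)), ((p.1 - q.1) ^ 2 + (p.2 - q.2) ^ 2 + s ^ 2) :=
    setIntegral_mono
      (by fun_prop : Continuous fun p : ℝ × ℝ => 2 * s * ‖p - q‖).integrableOn_Icc
      (by fun_prop : Continuous fun p : ℝ × ℝ =>
        (p.1 - q.1) ^ 2 + (p.2 - q.2) ^ 2 + s ^ 2).integrableOn_Icc hpt
  rw [integral_const_mul, integral_add (by fun_prop : Continuous fun p : ℝ × ℝ =>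
      (p.1 - q.1) ^ 2 + (p.2 - q.2) ^ 2).integrableOn_Icc continuous_const.integrableOn_Icc,
    setIntegral_const, hvol, smul_eq_mul] at hmono
  nlinarith

lemma le_setIntegral_Icc_sub_mul_norm_sub {a q : ℝ × ℝ} {s lam z : ℝ} (hs : 0 < s)
    (hlam : 0 ≤ lam) (hq : q ∈ Icc a (a + (s, s))) :
    s ^ 2 * (z - 5 / 6 * lam * s) ≤ ∫ p in Icc a (a + (s, s)), (z - lam * ‖p - q‖) := by
  have hvol := volume_real_Icc_prod (hq.1.trans hq.2)
  simp only [Prod.fst_add, Prod.snd_add, add_sub_cancel_left] at hvol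
  rw [integral_sub continuous_const.integrableOn_Icc
      (by fun_prop : Continuous fun p : ℝ × ℝ => lam * ‖p - q‖).integrableOn_Icc,
    setIntegral_const, integral_const_mul, hvol, smul_eq_mul]
  nlinarith [mul_le_mul_of_nonneg_left (setIntegral_Icc_norm_sub_le hs hq) hlam]

theorem volume_lower_bound_large_value_general
    (lam s z : ℝ) (f : ℝ × ℝ → ℝ) (a q : ℝ × ℝ)
    (hlam : 0 < lam) (hs : 0 < s)
    (R : Set (ℝ × ℝ)) (hR : R = Set.Icc a (a + (s, s)))
    (hlip : ∀ p ∈ R, ∀ p' ∈ R, |f p - f p'| ≤ lam * ‖p - p'‖)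
    (hint : IntegrableOn f R)
    (hq : q ∈ R) (hz : f q = z) :
    s ^ 2 * (z - (2 * Real.sqrt 2 / 3) * lam * s) ≤ ∫ p in R, f p := by
  subst hR hz
  have hcone : ∀ p ∈ Icc a (a + (s, s)), f q - lam * ‖p - q‖ ≤ f p := fun p hp => by
    linarith [neg_abs_le (f p - f q), hlip p hp q hq]
  have hsqrt2 : 5 / 4 ≤ Real.sqrt 2 := Real.le_sqrt_of_sq_le (by norm_num)
  calc s ^ 2 * (f q - (2 * Real.sqrt 2 / 3) * lam * s)
      ≤ s ^ 2 * (f q - 5 / 6 * lam * s) := by nlinarith [mul_pos hlam (pow_pos hs 3)]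
    _ ≤ ∫ p in Icc a (a + (s, s)), (f q - lam * ‖p - q‖) :=
      le_setIntegral_Icc_sub_mul_norm_sub hs hlam.le hq
    _ ≤ ∫ p in Icc a (a + (s, s)), f p :=
      setIntegral_mono_on
        (by fun_prop : Continuous fun p : ℝ × ℝ => f q - lam * ‖p - q‖).integrableOn_Icc
        hint measurableSet_Icc hcone

/-- If `f` is nonnegative and `λ`-Lipschitz on an axis-aligned square `R`
of side length `s`, and `f(x,y) = z` for some `(x,y) ∈ R` with `z ≥ √2·λ·s`,
then `∫_R f ≥ s²·(z − (2√2/3)·λ·s)`. -/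
theorem volume_lower_bound_large_value
    (lam s z : ℝ) (f : ℝ × ℝ → ℝ) (a q : ℝ × ℝ)
    (hlam : 0 < lam) (hs : 0 < s)
    (R : Set (ℝ × ℝ)) (hR : R = Set.Icc a (a + (s, s)))
    (hf0 : ∀ p ∈ R, 0 ≤ f p)
    (hlip : ∀ p ∈ R, ∀ p' ∈ R, |f p - f p'| ≤ lam * ‖p - p'‖)
    (hint : IntegrableOn f R)
    (hq : q ∈ R) (hz : f q = z)
    (hlarge : Real.sqrt 2 * lam * s ≤ z) :
    s ^ 2 * (z - (2 * Real.sqrt 2 / 3) * lam * s) ≤ ∫ p in R, f p :=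
  volume_lower_bound_large_value_general lam s z f a q hlam hs R hR hlip hint hq hz
end

section
/- No set of 6 points in ℝ² can be shattered by the family of infinite strips bounded by two parallel non-vertical lines. Hence the VC-dimension of the range space (points in ℝ², strips) is at most 5. -/
/-!
A point `(x, y)` lies in the strip `c ≤ y - t x ≤ d` (with `c ≤ d`) iff
`(y - t x - c) (y - t x - d) ≤ 0`, and this quadratic is `y²` plus a linear combination of
`xy, x², y, x, 1`. So strips are sublevel sets of `y² + v` with `v` ranging over a
5-dimensional space, and such a family cannot shatter 6 points: a linear dependency
`∑ wᵢ φ(pᵢ) = 0` among the 6 monomial vectors makes `∑ wᵢ h(pᵢ)` the same for every `h`,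
but cutting out `{i | 0 < wᵢ}` forces this sum to be `≤ 0`, and cutting out its
complement forces it to be `> 0`.
-/

open Finset Module

section Sublevel

variable {𝕜 ι E : Type*} [Field 𝕜] [LinearOrder 𝕜] [IsStrictOrderedRing 𝕜] [Fintype ι]
  [AddCommGroup E] [Module 𝕜 E]

theorem exists_sum_smul_eq_zero_pos_of_finrank_lt_card [FiniteDimensional 𝕜 E] (φ : ι → E)
    (hcard : finrank 𝕜 E < Fintype.card ι) :
    ∃ w : ι → 𝕜, ∑ i, w i • φ i = 0 ∧ ∃ i₀, 0 < w i₀ := by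
  obtain ⟨w, hw, i₀, hi₀⟩ := Fintype.not_linearIndependent_iff (v := φ) |>.mp
    fun hφ => hcard.not_ge hφ.fintype_card_le_finrank
  rcases hi₀.lt_or_gt with hneg | hpos
  · exact ⟨-w, by simp [hw], i₀, neg_pos.mpr hneg⟩
  · exact ⟨w, hw, i₀, hpos⟩

theorem not_forall_exists_sublevel_iff_of_finrank_lt_card [FiniteDimensional 𝕜 E]
    (g : ι → 𝕜) (φ : ι → E) (hcard : finrank 𝕜 E < Fintype.card ι) :
    ¬ ∀ S : Set ι, ∃ ℓ : Dual 𝕜 E, ∀ i, g i + ℓ (φ i) ≤ 0 ↔ i ∈ S := by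
  intro h
  obtain ⟨w, hw, i₀, hi₀⟩ := exists_sum_smul_eq_zero_pos_of_finrank_lt_card φ hcard
  have hsum : ∀ ℓ : Dual 𝕜 E, ∑ i, w i * (g i + ℓ (φ i)) = ∑ i, w i * g i := by
    intro ℓ
    have := congrArg ℓ hw
    simp only [map_sum, map_smul, smul_eq_mul, map_zero] at this
    simp [mul_add, sum_add_distrib, this]
  obtain ⟨ℓ₁, hℓ₁⟩ := h {i | 0 < w i}
  obtain ⟨ℓ₂, hℓ₂⟩ := h {i | w i ≤ 0}
  have h₁ : ∑ i, w i * (g i + ℓ₁ (φ i)) ≤ 0 := by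
    refine sum_nonpos fun i _ => ?_
    rcases lt_or_ge 0 (w i) with hw | hw
    · exact mul_nonpos_of_nonneg_of_nonpos hw.le ((hℓ₁ i).mpr hw)
    · exact mul_nonpos_of_nonpos_of_nonneg hw (not_le.mp (mt (hℓ₁ i).mp hw.not_gt)).le
  have h₂ : 0 < ∑ i, w i * (g i + ℓ₂ (φ i)) := by
    refine sum_pos' (fun i _ => ?_) ⟨i₀, mem_univ _, mul_pos hi₀ ?_⟩
    · rcases le_or_gt (w i) 0 with hw | hw
      · exact mul_nonneg_of_nonpos_of_nonpos hw ((hℓ₂ i).mpr hw)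
      · exact mul_nonneg hw.le (not_le.mp (mt (hℓ₂ i).mp hw.not_ge)).le
    · exact not_le.mp (mt (hℓ₂ i₀).mp hi₀.not_ge)
  linarith [hsum ℓ₁, hsum ℓ₂]

end Sublevel

def quadMonomials (q : ℝ × ℝ) : Fin 5 → ℝ := ![q.1 * q.2, q.1 ^ 2, q.2, q.1, 1]

theorem exists_dual_forall_strip_iff (t c d : ℝ) :
    ∃ ℓ : Dual ℝ (Fin 5 → ℝ), ∀ q : ℝ × ℝ,
      (c ≤ q.2 - t * q.1 ∧ q.2 - t * q.1 ≤ d) ↔ q.2 ^ 2 + ℓ (quadMonomials q) ≤ 0 := by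
  by_cases hcd : c ≤ d
  · refine ⟨dotProductEquiv ℝ (Fin 5) ![-2 * t, t ^ 2, -(c + d), t * (c + d), c * d], fun q => ?_⟩
    rw [← sub_mul_sub_nonpos_iff _ hcd]
    congr! 1
    simp only [quadMonomials, dotProductEquiv_apply_apply, dotProduct, Fin.sum_univ_five,
      Matrix.cons_val_zero, Matrix.cons_val_one, Matrix.cons_val]
    ring
  · refine ⟨dotProductEquiv ℝ (Fin 5) ![0, 0, 0, 0, 1], fun q =>
      iff_of_false (fun h => hcd (h.1.trans h.2)) ?_⟩
    simp only [quadMonomials, dotProductEquiv_apply_apply, dotProduct, Fin.sum_univ_five,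
      Matrix.cons_val_zero, Matrix.cons_val_one, Matrix.cons_val, zero_mul, zero_add, mul_one,
      not_le]
    positivity

theorem no_six_points_shattered_by_strips_general (p : Fin 6 → ℝ × ℝ) :
    ¬ (∀ S : Set (Fin 6), ∃ t c d : ℝ,
        ∀ i : Fin 6, (c ≤ (p i).2 - t * (p i).1 ∧ (p i).2 - t * (p i).1 ≤ d) ↔ i ∈ S) := by
  intro h
  refine not_forall_exists_sublevel_iff_of_finrank_lt_card (fun i => (p i).2 ^ 2)
    (quadMonomials ∘ p) (by simp) fun S => ?_
  obtain ⟨t, c, d, hS⟩ := h S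
  obtain ⟨ℓ, hℓ⟩ := exists_dual_forall_strip_iff t c d
  exact ⟨ℓ, fun i => (hℓ (p i)).symm.trans (hS i)⟩

/-- No set of 6 (distinct) points in `ℝ²` can be shattered by the family
of infinite strips bounded by two parallel non-vertical lines (a strip with slope `t` and
intercepts `c ≤ d` is `{p | c ≤ p.2 - t·p.1 ≤ d}`). Hence the VC-dimension of the range
space of points in `ℝ²` with strip ranges is at most 5. -/
theorem no_six_points_shattered_by_strips (p : Fin 6 → ℝ × ℝ)
    (hp : Function.Injective p) :
    ¬ (∀ S : Set (Fin 6), ∃ t c d : ℝ,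
        ∀ i : Fin 6, (c ≤ (p i).2 - t * (p i).1 ∧ (p i).2 - t * (p i).1 ≤ d) ↔ i ∈ S) :=
  no_six_points_shattered_by_strips_general p
end

section
/- Sauer's Lemma: if (S, R) is a range space of VC-dimension d with |S| = n, then |R| ≤ Σ_{i=0}^{d} C(n, i). -/
/-!
By Pajor's variant of the Sauer–Shelah lemma, a set family has at most as many members as there
are sets it shatters. Every set shattered by `R` is a subset of `S` of size at most `d`, and there
are at most `∑_{i ≤ d} C(|S|, i)` of those.
-/

/-- A family of ranges `R` shatters a finite set `Y` if every subset of `Y` is of the form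
`r ∩ Y` for some range `r ∈ R`. -/
def FinShatters {α : Type*} [DecidableEq α] (R : Finset (Finset α)) (Y : Finset α) : Prop :=
  ∀ Z ⊆ Y, ∃ r ∈ R, r ∩ Y = Z

open Finset

namespace Finset

variable {α : Type*} [DecidableEq α] {𝒜 : Finset (Finset α)} {s t : Finset α}

lemma finShatters_iff_shatters : FinShatters 𝒜 s ↔ 𝒜.Shatters s := by
  simp only [FinShatters, Shatters, inter_comm s]

lemma Shatters.subset_of_forall_subset (hs : 𝒜.Shatters s) (h𝒜 : ∀ u ∈ 𝒜, u ⊆ t) : s ⊆ t := by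
  obtain ⟨u, hu, hsu⟩ := hs.exists_superset
  exact hsu.trans (h𝒜 u hu)

lemma card_le_sum_choose_of_forall_subset_card_le {d : ℕ} (h𝒜 : ∀ u ∈ 𝒜, u ⊆ s ∧ #u ≤ d) :
    #𝒜 ≤ ∑ i ∈ range (d + 1), (#s).choose i := by
  have h𝒜_sub : 𝒜 ⊆ (range (d + 1)).biUnion fun i ↦ s.powersetCard i := fun u hu ↦
    mem_biUnion.2 ⟨#u, mem_range.2 (Nat.lt_succ_of_le (h𝒜 u hu).2),
      mem_powersetCard.2 ⟨(h𝒜 u hu).1, rfl⟩⟩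
  calc #𝒜 ≤ #((range (d + 1)).biUnion fun i ↦ s.powersetCard i) := card_le_card h𝒜_sub
    _ ≤ ∑ i ∈ range (d + 1), #(s.powersetCard i) := card_biUnion_le
    _ = ∑ i ∈ range (d + 1), (#s).choose i := by simp only [card_powersetCard]

end Finset

/-- **Sauer's lemma.** If `(S, R)` is a range space of VC-dimension at most
`d` (every shattered subset of `S` has size at most `d`) with `|S| = n`, then
`|R| ≤ Σ_{i=0}^{d} C(n, i)`. -/
theorem sauer_lemma {α : Type*} [DecidableEq α]
    (S : Finset α) (R : Finset (Finset α)) (d : ℕ)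
    (hR : ∀ r ∈ R, r ⊆ S)
    (hVC : ∀ Y : Finset α, Y ⊆ S → FinShatters R Y → Y.card ≤ d) :
    R.card ≤ ∑ i ∈ Finset.range (d + 1), (S.card).choose i := by
  refine (card_le_card_shatterer R).trans (card_le_sum_choose_of_forall_subset_card_le ?_)
  intro Y hY
  have hRY : R.Shatters Y := mem_shatterer.1 hY
  have hYS : Y ⊆ S := hRY.subset_of_forall_subset hR
  exact ⟨hYS, hVC Y hYS (finShatters_iff_shatters.2 hRY)⟩
end

section
/- Let (S, R'), (S, R'') be two range spaces on a common ground set S, each of VC-dimension at most 5, and let R ⊆ {r' ∩ r'' : r' ∈ R', r'' ∈ R''}. Then the VC-dimension of (S, R) is at most 38. More precisely, if d satisfies 2^d ≤ (Σ_{i=0}^{5} C(d,i))², then d ≤ 38; in particular 2^38 ≤ (Σ_{i=0}^{5} C(38,i))² holds but 2^39 > (Σ_{i=0}^{5} C(39,i))². -/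
/-- A family of ranges `R` (subsets of `α`) shatters a finite set `Y` if every subset
of `Y` is of the form `↑Y ∩ r` for some `r ∈ R`. -/
def SetShatters {α : Type*} (R : Set (Set α)) (Y : Finset α) : Prop :=
  ∀ Z ⊆ Y, ∃ r ∈ R, (Y : Set α) ∩ r = (Z : Set α)

/-!
Restrict everything to a shattered set `Y` with `d` elements. The trace of `R` on `Y` is all of
`2^Y`, while each trace of an intersection `r' ∩ r''` is the intersection of the traces of `r'`
and `r''`; so `2^d` is at most the product of the sizes of the traces of `R'` and `R''`, each of
which is at most `Σ_{i ≤ 5} C(d, i)` by the Sauer–Shelah lemma. Finally, the ratio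
`Σ_{i ≤ 5} C(d + 1, i) / Σ_{i ≤ 5} C(d, i)` is at most `7/5 < √2` once `d ≥ 19`, so the
inequality `2^d ≤ (Σ_{i ≤ 5} C(d, i))²`, which fails at `d = 39`, fails for all `d ≥ 39`.
-/

open Finset

lemma sum_range_choose_le_two_mul_choose {d k : ℕ} (h : 3 * k ≤ d + 1) :
    ∑ i ∈ range (k + 1), d.choose i ≤ 2 * d.choose k := by
  induction k with
  | zero => simp
  | succ k ih =>
    have hratio : 2 * d.choose k ≤ d.choose (k + 1) := by
      refine Nat.le_of_mul_le_mul_right (c := k + 1) ?_ k.succ_pos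
      calc 2 * d.choose k * (k + 1) = d.choose k * (2 * (k + 1)) := by ring
        _ ≤ d.choose k * (d - k) := Nat.mul_le_mul_left _ (by omega)
        _ = d.choose (k + 1) * (k + 1) := (Nat.choose_succ_right_eq d k).symm
    rw [sum_range_succ]
    have := ih (by omega)
    omega

lemma sum_range_choose_succ (k d : ℕ) :
    ∑ i ∈ range (k + 1), (d + 1).choose i =
      ∑ i ∈ range (k + 1), d.choose i + ∑ i ∈ range k, d.choose i := by
  rw [sum_range_succ', sum_range_succ' (fun i ↦ d.choose i)]
  simp only [Nat.choose_succ_succ', sum_add_distrib, Nat.choose_zero_right]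
  ring

lemma five_mul_sum_range_six_choose_succ_le {d : ℕ} (hd : 19 ≤ d) :
    5 * ∑ i ∈ range 6, (d + 1).choose i ≤ 7 * ∑ i ∈ range 6, d.choose i := by
  have hlow : ∑ i ∈ range 5, d.choose i ≤ 2 * d.choose 4 :=
    sum_range_choose_le_two_mul_choose (by omega)
  have htop : d.choose 4 * 15 ≤ d.choose 5 * 5 := by
    rw [Nat.choose_succ_right_eq d 4]
    exact Nat.mul_le_mul_left _ (by omega)
  rw [sum_range_choose_succ 5 d, sum_range_succ _ 5]
  omega

lemma sq_sum_range_six_choose_lt_two_pow {d : ℕ} (hd : 39 ≤ d) :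
    (∑ i ∈ range 6, d.choose i) ^ 2 < 2 ^ d := by
  induction d, hd using Nat.le_induction with
  | base => norm_num [sum_range_succ, Nat.choose]
  | succ n hn ih =>
    have hstep :=
      Nat.pow_le_pow_left (five_mul_sum_range_six_choose_succ_le (by omega : 19 ≤ n)) 2
    rw [mul_pow, mul_pow] at hstep
    rw [pow_succ 2 n]
    omega

lemma le_thirtyEight_of_two_pow_le_sq_sum_range_six_choose {d : ℕ}
    (h : 2 ^ d ≤ (∑ i ∈ range 6, d.choose i) ^ 2) : d ≤ 38 := by
  by_contra! hd
  exact (sq_sum_range_six_choose_lt_two_pow hd).not_ge h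

section Trace

variable {α : Type*} {R R' R'' : Set (Set α)} {Y s : Finset α} {k : ℕ}

noncomputable def setTrace (R : Set (Set α)) (Y : Finset α) : Finset (Finset α) := by
  classical exact Y.powerset.filter fun Z ↦ ∃ r ∈ R, (Y : Set α) ∩ r = Z

lemma mem_setTrace {Z : Finset α} : Z ∈ setTrace R Y ↔ ∃ r ∈ R, (Y : Set α) ∩ r = Z := by
  classical
  rw [setTrace, mem_filter, mem_powerset]
  exact and_iff_right_of_imp fun ⟨r, _, hr⟩ ↦ coe_subset.1 (hr ▸ Set.inter_subset_left)

lemma setTrace_subset_powerset : setTrace R Y ⊆ Y.powerset := by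
  classical
  exact filter_subset _ _

lemma SetShatters.setTrace_eq (hY : SetShatters R Y) : setTrace R Y = Y.powerset :=
  setTrace_subset_powerset.antisymm fun Z hZ ↦ mem_setTrace.2 (hY Z (mem_powerset.1 hZ))

lemma Finset.Shatters.subset_of_setTrace [DecidableEq α] (h : (setTrace R Y).Shatters s) :
    s ⊆ Y := by
  obtain ⟨u, hu, hsu⟩ := h.exists_superset
  exact hsu.trans (mem_powerset.1 (setTrace_subset_powerset hu))

lemma Finset.Shatters.setShatters_of_setTrace [DecidableEq α]
    (h : (setTrace R Y).Shatters s) : SetShatters R s := by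
  intro t ht
  obtain ⟨u, hu, hsu⟩ := h ht
  obtain ⟨r, hr, hYr⟩ := mem_setTrace.1 hu
  refine ⟨r, hr, ?_⟩
  calc (s : Set α) ∩ r = (s : Set α) ∩ ((Y : Set α) ∩ r) := by
        rw [← Set.inter_assoc, Set.inter_eq_left.2 (coe_subset.2 h.subset_of_setTrace)]
    _ = t := by rw [hYr, ← coe_inter, hsu]

lemma card_setTrace_le (hR : ∀ Y : Finset α, SetShatters R Y → #Y ≤ k) (Y : Finset α) :
    #(setTrace R Y) ≤ ∑ i ∈ range (k + 1), (#Y).choose i := by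
  classical
  have hsmall : (setTrace R Y).shatterer ⊆ (range (k + 1)).biUnion Y.powersetCard := by
    intro s hs
    have hsh := mem_shatterer.1 hs
    exact mem_biUnion.2 ⟨#s, mem_range.2 (Nat.lt_succ_of_le (hR s hsh.setShatters_of_setTrace)),
      mem_powersetCard.2 ⟨hsh.subset_of_setTrace, rfl⟩⟩
  calc #(setTrace R Y) ≤ #(setTrace R Y).shatterer := card_le_card_shatterer _
    _ ≤ #((range (k + 1)).biUnion Y.powersetCard) := card_le_card hsmall
    _ ≤ ∑ i ∈ range (k + 1), #(Y.powersetCard i) := card_biUnion_le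
    _ = ∑ i ∈ range (k + 1), (#Y).choose i := by simp only [card_powersetCard]

lemma filter_mem_setTrace {r : Set α} [DecidablePred (· ∈ r)] (hr : r ∈ R) :
    Y.filter (· ∈ r) ∈ setTrace R Y :=
  mem_setTrace.2 ⟨r, hr, (coe_filter _ _).symm⟩

lemma setTrace_subset_image_inter [DecidableEq α]
    (hR : ∀ r ∈ R, ∃ r' ∈ R', ∃ r'' ∈ R'', r = r' ∩ r'') :
    setTrace R Y ⊆ (setTrace R' Y ×ˢ setTrace R'' Y).image fun p ↦ p.1 ∩ p.2 := by
  classical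
  intro Z hZ
  obtain ⟨r, hr, hYr⟩ := mem_setTrace.1 hZ
  obtain ⟨r', hr', r'', hr'', rfl⟩ := hR r hr
  refine mem_image.2 ⟨(Y.filter (· ∈ r'), Y.filter (· ∈ r'')),
    mem_product.2 ⟨filter_mem_setTrace hr', filter_mem_setTrace hr''⟩, coe_injective ?_⟩
  rw [coe_inter, coe_filter, coe_filter, ← hYr, Set.inter_inter_distrib_left]
  rfl

lemma card_setTrace_le_mul (hR : ∀ r ∈ R, ∃ r' ∈ R', ∃ r'' ∈ R'', r = r' ∩ r'') :
    #(setTrace R Y) ≤ #(setTrace R' Y) * #(setTrace R'' Y) := by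
  classical
  calc #(setTrace R Y) ≤ #((setTrace R' Y ×ˢ setTrace R'' Y).image fun p ↦ p.1 ∩ p.2) :=
        card_le_card (setTrace_subset_image_inter hR)
    _ ≤ #(setTrace R' Y ×ˢ setTrace R'' Y) := card_image_le
    _ = #(setTrace R' Y) * #(setTrace R'' Y) := card_product _ _

lemma SetShatters.two_pow_card_le_sq_of_inter
    (hR' : ∀ Y : Finset α, SetShatters R' Y → #Y ≤ k)
    (hR'' : ∀ Y : Finset α, SetShatters R'' Y → #Y ≤ k)
    (hR : ∀ r ∈ R, ∃ r' ∈ R', ∃ r'' ∈ R'', r = r' ∩ r'') (hY : SetShatters R Y) :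
    2 ^ #Y ≤ (∑ i ∈ range (k + 1), (#Y).choose i) ^ 2 :=
  calc 2 ^ #Y = #(setTrace R Y) := by rw [hY.setTrace_eq, card_powerset]
    _ ≤ #(setTrace R' Y) * #(setTrace R'' Y) := card_setTrace_le_mul hR
    _ ≤ (∑ i ∈ range (k + 1), (#Y).choose i) * ∑ i ∈ range (k + 1), (#Y).choose i :=
        Nat.mul_le_mul (card_setTrace_le hR' Y) (card_setTrace_le hR'' Y)
    _ = (∑ i ∈ range (k + 1), (#Y).choose i) ^ 2 := (sq _).symm

end Trace

/-- If `(S, R')` and `(S, R'')` are range spaces of VC-dimension at most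
`5` on a common ground set, and every range of `R` is an intersection `r' ∩ r''` with
`r' ∈ R'`, `r'' ∈ R''`, then the VC-dimension of `(S, R)` is at most `38`. More precisely,
any `d` with `2^d ≤ (Σ_{i=0}^{5} C(d,i))²` satisfies `d ≤ 38`; in particular
`2^38 ≤ (Σ_{i=0}^{5} C(38,i))²` holds but `2^39 > (Σ_{i=0}^{5} C(39,i))²`. -/
theorem vc_dim_of_intersections {α : Type*}
    (R' R'' R : Set (Set α))
    (hR' : ∀ Y : Finset α, SetShatters R' Y → Y.card ≤ 5)
    (hR'' : ∀ Y : Finset α, SetShatters R'' Y → Y.card ≤ 5)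
    (hR : ∀ r ∈ R, ∃ r' ∈ R', ∃ r'' ∈ R'', r = r' ∩ r'') :
    (∀ Y : Finset α, SetShatters R Y → Y.card ≤ 38) ∧
    (∀ d : ℕ, 2 ^ d ≤ (∑ i ∈ Finset.range 6, d.choose i) ^ 2 → d ≤ 38) ∧
    (2 ^ 38 ≤ (∑ i ∈ Finset.range 6, Nat.choose 38 i) ^ 2) ∧
    ((∑ i ∈ Finset.range 6, Nat.choose 39 i) ^ 2 < 2 ^ 39) :=
  ⟨fun _ hY ↦ le_thirtyEight_of_two_pow_le_sq_sum_range_six_choose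
      (hY.two_pow_card_le_sq_of_inter hR' hR'' hR),
    fun _ ↦ le_thirtyEight_of_two_pow_le_sq_sum_range_six_choose,
    by norm_num [sum_range_succ, Nat.choose],
    sq_sum_range_six_choose_lt_two_pow le_rfl⟩
end

section
/- Let K : [-1,1]² → ℝ≥0 with total integral 1 and K ≤ 1 pointwise. Partition [-1,1]² into an r×r grid G (cells of area 4/r²), and for each cell c let z(c) be the average of K over c; place ⌈r·z(c)⌉ points in each cell to form the sample S(r). Then r³/4 ≤ |S(r)| ≤ r³/4 + r², and for every axis-aligned square R overlapping [-1,1]²: | |S(r) ∩ R| / |S(r)| − ∫_{R∩[-1,1]²} K | ≤ 36/r (for r ≥ 1). -/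
/-!
A cell `c` carries the mass `V c = ∫_c K ∈ [0, 4/r²]`, these masses sum to `1`, and `c` receives
`n c = ⌈L · V c⌉` points with `L = r³/4`; hence `L ≤ N := ∑ n c ≤ L + r²`. For a box `R`, a cell
disjoint from `R` contributes nothing to either side, and a cell inside `R` contributes
`n c / N - V c ∈ [-V c (N - L)/N, 1/L]`, which sums to at most `2r²/L = 8/r`. Only the cells
meeting the boundary of `R` remain: in each coordinate at most two grid intervals straddle an
endpoint of `R`, so there are at most `4r` of them, each contributing at most `V c ≤ 4/r²` beyond
the `1/L` already counted. The total error is `24/r`.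
-/

open MeasureTheory

/-- The `(i,j)`-cell of the regular `r × r` grid on `[-1,1]²` (cells of area `4/r²`). -/
noncomputable def gridCell (r : ℕ) (c : Fin r × Fin r) : Set (ℝ × ℝ) :=
  Set.Icc (-1 + 2 * (c.1 : ℝ) / r, -1 + 2 * (c.2 : ℝ) / r)
    (-1 + 2 * ((c.1 : ℝ) + 1) / r, -1 + 2 * ((c.2 : ℝ) + 1) / r)

/-- The average value `z(c)` of `K` over the grid cell `c` (which has area `4/r²`). -/
noncomputable def cellAvg (K : ℝ × ℝ → ℝ) (r : ℕ) (c : Fin r × Fin r) : ℝ :=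
  ((r : ℝ) ^ 2 / 4) * ∫ p in gridCell r c, K p

/-- The number `⌈r·z(c)⌉` of sample points placed in grid cell `c`. -/
noncomputable def nPts (K : ℝ × ℝ → ℝ) (r : ℕ) (c : Fin r × Fin r) : ℕ :=
  ⌈(r : ℝ) * cellAvg K r c⌉₊

open Set Function
open scoped Finset

lemma Set.iUnion_fin_Ico_eq {X : Type*} [LinearOrder X] {g : ℕ → X} (hg : Monotone g) (n : ℕ) :
    ⋃ i : Fin n, Ico (g i) (g (i + 1)) = Ico (g 0) (g n) := by
  refine Subset.antisymm (iUnion_subset fun i => Ico_subset_Ico (hg i.val.zero_le) (hg i.2)) ?_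
  intro x hx
  obtain ⟨i, hi, hx⟩ := mem_iUnion₂.1 (Ico_subset_biUnion_Ico n g hx)
  exact mem_iUnion.2 ⟨⟨i, Finset.mem_range.1 hi⟩, hx⟩

lemma Finset.card_filter_mem_le_one {ι α : Type*} [Fintype ι] {s : ι → Set α}
    (hs : Pairwise (Disjoint on s)) (x : α) [DecidablePred fun i => x ∈ s i] :
    #{i | x ∈ s i} ≤ 1 :=
  Finset.card_le_one.2 fun i hi j hj => by
    by_contra hij
    simp only [Finset.mem_filter, Finset.mem_univ, true_and] at hi hj
    exact Set.disjoint_left.1 (hs hij) hi hj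

lemma left_mem_Ioc_or_right_mem_Ico_of_not_subset {α : Type*} [LinearOrder α] {a b u v : α}
    (hmeet : (Icc a b ∩ Icc u v).Nonempty) (hsub : ¬ Icc a b ⊆ Icc u v) :
    u ∈ Ioc a b ∨ v ∈ Ico a b := by
  obtain ⟨x, ⟨hax, hxb⟩, hux, hxv⟩ := hmeet
  rw [Icc_subset_Icc_iff (hax.trans hxb), not_and_or, not_le, not_le] at hsub
  rcases hsub with hau | hvb
  · exact Or.inl ⟨hau, hux.trans hxb⟩
  · exact Or.inr ⟨hax.trans hxv, hvb⟩

lemma Set.nonempty_inter_not_subset_of_prod {α β : Type*} {s s' : Set α} {t t' : Set β}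
    (hmeet : (s ×ˢ t ∩ s' ×ˢ t').Nonempty) (hsub : ¬ s ×ˢ t ⊆ s' ×ˢ t') :
    ((s ∩ s').Nonempty ∧ ¬ s ⊆ s') ∨ ((t ∩ t').Nonempty ∧ ¬ t ⊆ t') := by
  rw [prod_inter_prod, prod_nonempty_iff] at hmeet
  by_cases hs : s ⊆ s'
  · exact Or.inr ⟨hmeet.2, fun ht => hsub (prod_mono hs ht)⟩
  · exact Or.inl ⟨hmeet.1, hs⟩

open Classical in
lemma card_filter_Icc_meets_not_subset_le_two {α : Type*} [LinearOrder α] {g : ℕ → α}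
    (hg : Monotone g) (n : ℕ) (u v : α) :
    #{i : Fin n | (Icc (g i) (g (i + 1)) ∩ Icc u v).Nonempty ∧
      ¬ Icc (g i) (g (i + 1)) ⊆ Icc u v} ≤ 2 := by
  have hIoc := hg.pairwise_disjoint_on_Ioc_succ.comp_of_injective (Fin.val_injective (n := n))
  have hIco := hg.pairwise_disjoint_on_Ico_succ.comp_of_injective (Fin.val_injective (n := n))
  calc _ ≤ #(({i | u ∈ Ioc (g i) (g (i + 1))} : Finset (Fin n)) ∪
        ({i | v ∈ Ico (g i) (g (i + 1))} : Finset (Fin n))) := by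
        refine Finset.card_le_card fun i hi => ?_
        simp only [Finset.mem_filter, Finset.mem_univ, true_and, Finset.mem_union] at hi ⊢
        exact left_mem_Ioc_or_right_mem_Ico_of_not_subset hi.1 hi.2
    _ ≤ 1 + 1 := (Finset.card_union_le _ _).trans (add_le_add
        (Finset.card_filter_mem_le_one (s := fun i : Fin n => Ioc (g i) (g (i + 1))) hIoc u)
        (Finset.card_filter_mem_le_one (s := fun i : Fin n => Ico (g i) (g (i + 1))) hIco v))

lemma ncard_setOf_lt_and (n : ℕ) (P : ℕ → Prop) [DecidablePred P] :
    {k | k < n ∧ P k}.ncard = #{k ∈ Finset.range n | P k} := by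
  rw [← ncard_coe_finset]; congr 1; ext; simp

lemma ncard_setOf_lt_and_le (n : ℕ) (P : ℕ → Prop) : {k | k < n ∧ P k}.ncard ≤ n := by
  classical
  rw [ncard_setOf_lt_and]
  exact (Finset.card_filter_le _ _).trans_eq (Finset.card_range n)

lemma ncard_setOf_lt_and_of_forall {n : ℕ} {P : ℕ → Prop} (h : ∀ k < n, P k) :
    {k | k < n ∧ P k}.ncard = n := by
  classical
  rw [ncard_setOf_lt_and, Finset.filter_true_of_mem (fun k hk => h k (Finset.mem_range.1 hk)),
    Finset.card_range]

lemma ncard_setOf_lt_and_of_forall_not {n : ℕ} {P : ℕ → Prop} (h : ∀ k < n, ¬ P k) :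
    {k | k < n ∧ P k}.ncard = 0 := by
  classical
  rw [ncard_setOf_lt_and, Finset.card_eq_zero, Finset.filter_eq_empty_iff]
  exact fun k hk => h k (Finset.mem_range.1 hk)

lemma ncard_and_setIntegral_inter_cases {α : Type*} [MeasurableSpace α] {μ : Measure α}
    {s R : Set α} {x : ℕ → α} {n : ℕ} (hx : ∀ k < n, x k ∈ s) (f : α → ℝ)
    (h : ¬ ((s ∩ R).Nonempty ∧ ¬ s ⊆ R)) :
    ({k | k < n ∧ x k ∈ R}.ncard = 0 ∧ ∫ p in s ∩ R, f p ∂μ = 0) ∨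
      ({k | k < n ∧ x k ∈ R}.ncard = n ∧ ∫ p in s ∩ R, f p ∂μ = ∫ p in s, f p ∂μ) := by
  rcases not_and_or.1 h with hmeet | hsub
  · rw [not_nonempty_iff_eq_empty] at hmeet
    exact Or.inl ⟨ncard_setOf_lt_and_of_forall_not fun k hk hkR => hmeet.subset ⟨hx k hk, hkR⟩,
      by simp [hmeet]⟩
  · rw [not_not] at hsub
    exact Or.inr ⟨ncard_setOf_lt_and_of_forall fun k hk => hsub (hx k hk),
      by rw [inter_eq_self_of_subset_left hsub]⟩

lemma setIntegral_inter_nonneg_and_le {α : Type*} [MeasurableSpace α] {μ : Measure α}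
    {f : α → ℝ} (hf0 : ∀ p, 0 ≤ f p) {s : Set α} (hf : IntegrableOn f s μ) (R : Set α) :
    0 ≤ ∫ p in s ∩ R, f p ∂μ ∧ ∫ p in s ∩ R, f p ∂μ ≤ ∫ p in s, f p ∂μ :=
  ⟨integral_nonneg hf0,
    setIntegral_mono_set hf (.of_forall hf0) inter_subset_left.eventuallyLE⟩

section Discrepancy

open Finset

variable {ι : Type*} [Fintype ι]

lemma le_sum_natCeil_mul (L : ℝ) (V : ι → ℝ) : L * ∑ c, V c ≤ ∑ c, (⌈L * V c⌉₊ : ℝ) := by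
  rw [mul_sum]
  exact sum_le_sum fun c _ => Nat.le_ceil _

lemma sum_natCeil_mul_le {L : ℝ} (hL : 0 ≤ L) {V : ι → ℝ} (hV : ∀ c, 0 ≤ V c) :
    ∑ c, (⌈L * V c⌉₊ : ℝ) ≤ L * ∑ c, V c + Fintype.card ι := by
  calc ∑ c, (⌈L * V c⌉₊ : ℝ) ≤ ∑ c, (L * V c + 1) :=
        sum_le_sum fun c _ => (Nat.ceil_lt_add_one (mul_nonneg hL (hV c))).le
    _ = L * ∑ c, V c + Fintype.card ι := by simp [sum_add_distrib, mul_sum]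

lemma natCeil_mul_div_le {L N V : ℝ} (hL : 0 < L) (hLN : L ≤ N) (hV : 0 ≤ V) :
    (⌈L * V⌉₊ : ℝ) / N ≤ V + 1 / L := calc
  (⌈L * V⌉₊ : ℝ) / N ≤ ⌈L * V⌉₊ / L := div_le_div_of_nonneg_left (Nat.cast_nonneg _) hL hLN
  _ ≤ (L * V + 1) / L := by gcongr; exact (Nat.ceil_lt_add_one (by positivity)).le
  _ = V + 1 / L := by field_simp

lemma abs_natCeil_mul_div_sub_le {L N V : ℝ} (hL : 0 < L) (hLN : L ≤ N) (hV : 0 ≤ V) :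
    |(⌈L * V⌉₊ : ℝ) / N - V| ≤ 1 / L + V * ((N - L) / N) := by
  have hN : 0 < N := hL.trans_le hLN
  have hlow : V * L / N ≤ ⌈L * V⌉₊ / N := by
    gcongr; rw [mul_comm]; exact Nat.le_ceil _
  have hsplit : V - V * L / N = V * ((N - L) / N) := by field_simp
  have hVN : 0 ≤ V * ((N - L) / N) := mul_nonneg hV (div_nonneg (by linarith) hN.le)
  rw [abs_sub_le_iff]
  constructor <;> linarith [natCeil_mul_div_le hL hLN hV, one_div_pos.2 hL]

lemma abs_div_sub_le_of_le_natCeil {L N V I : ℝ} {m : ℕ} (hL : 0 < L) (hLN : L ≤ N)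
    (hV : 0 ≤ V) (hm : m ≤ ⌈L * V⌉₊) (hI : 0 ≤ I ∧ I ≤ V) : |m / N - I| ≤ V + 1 / L := by
  have hN : 0 < N := hL.trans_le hLN
  have hmN : (m : ℝ) / N ≤ ⌈L * V⌉₊ / N := by gcongr
  rw [abs_sub_le_iff]
  constructor <;> linarith [natCeil_mul_div_le hL hLN hV, one_div_pos.2 hL,
    div_nonneg (Nat.cast_nonneg m) hN.le]

theorem abs_sum_div_sum_sub_sum_le (B : Finset ι) {V I : ι → ℝ} {n m : ι → ℕ} {L : ℝ}
    (hL : 0 < L) (hV : ∀ c, 0 ≤ V c) (hVsum : ∑ c, V c = 1) (hn : ∀ c, n c = ⌈L * V c⌉₊)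
    (hmn : ∀ c, m c ≤ n c) (hI : ∀ c, 0 ≤ I c ∧ I c ≤ V c)
    (hcell : ∀ c ∉ B, (m c = 0 ∧ I c = 0) ∨ (m c = n c ∧ I c = V c)) :
    |(∑ c, (m c : ℝ)) / (∑ c, (n c : ℝ)) - ∑ c, I c|
      ≤ 2 * Fintype.card ι / L + ∑ c ∈ B, V c := by
  classical
  set N := ∑ c, (n c : ℝ)
  have hLN : L ≤ N := by
    simpa [N, hn, hVsum] using le_sum_natCeil_mul L V
  have hNL : N ≤ L + Fintype.card ι := by
    simpa [N, hn, hVsum] using sum_natCeil_mul_le hL.le hV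
  have hcell_le : ∀ c,
      |m c / N - I c| ≤ 1 / L + V c * ((N - L) / N) + if c ∈ B then V c else 0 := by
    intro c
    have hVN : 0 ≤ V c * ((N - L) / N) := mul_nonneg (hV c) (div_nonneg (by linarith) (by linarith))
    by_cases hc : c ∈ B
    · rw [if_pos hc]
      linarith [abs_div_sub_le_of_le_natCeil hL hLN (hV c) (hn c ▸ hmn c) (hI c)]
    · rw [if_neg hc]
      rcases hcell c hc with ⟨hm, hIc⟩ | ⟨hm, hIc⟩
      · simp only [hm, hIc, CharP.cast_eq_zero, zero_div, sub_zero, abs_zero]; positivity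
      · rw [hm, hIc, hn]; simpa using abs_natCeil_mul_div_sub_le hL hLN (hV c)
  have hgap : (N - L) / N ≤ Fintype.card ι / L := by
    rw [div_le_div_iff₀ (by linarith) hL]; nlinarith
  calc |(∑ c, (m c : ℝ)) / N - ∑ c, I c| = |∑ c, ((m c : ℝ) / N - I c)| := by
        rw [sum_div, sum_sub_distrib]
    _ ≤ ∑ c, |(m c : ℝ) / N - I c| := abs_sum_le_sum_abs _ _
    _ ≤ ∑ c, (1 / L + V c * ((N - L) / N) + if c ∈ B then V c else 0) :=
        sum_le_sum fun c _ => hcell_le c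
    _ = Fintype.card ι / L + (N - L) / N + ∑ c ∈ B, V c := by
        rw [sum_add_distrib, sum_add_distrib, ← sum_mul, hVsum, sum_ite_mem, Finset.univ_inter]
        simp only [sum_const, card_univ, nsmul_eq_mul]
        ring
    _ ≤ 2 * Fintype.card ι / L + ∑ c ∈ B, V c := by
        have : (2 * Fintype.card ι / L : ℝ) = Fintype.card ι / L + Fintype.card ι / L := by ring
        linarith

end Discrepancy

noncomputable def gridPt (r i : ℕ) : ℝ := -1 + 2 * i / r

lemma gridPt_monotone (r : ℕ) : Monotone (gridPt r) := fun i j hij => by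
  unfold gridPt; gcongr

lemma gridPt_zero (r : ℕ) : gridPt r 0 = -1 := by simp [gridPt]

lemma gridPt_self {r : ℕ} (hr : 0 < r) : gridPt r r = 1 := by
  have : (r : ℝ) ≠ 0 := by positivity
  simp [gridPt, this]; norm_num

lemma gridPt_succ_sub (r i : ℕ) : gridPt r (i + 1) - gridPt r i = 2 / r := by
  simp only [gridPt]; push_cast; ring

lemma gridCell_eq_prod (r : ℕ) (c : Fin r × Fin r) :
    gridCell r c =
      Icc (gridPt r c.1) (gridPt r (c.1 + 1)) ×ˢ Icc (gridPt r c.2) (gridPt r (c.2 + 1)) := by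
  rw [gridCell, Icc_prod_eq]
  simp only [gridPt, Nat.cast_add, Nat.cast_one]

lemma volume_real_gridCell (r : ℕ) (c : Fin r × Fin r) :
    volume.real (gridCell r c) = 4 / (r : ℝ) ^ 2 := by
  rw [gridCell_eq_prod, Measure.volume_eq_prod, measureReal_prod_prod,
    Real.volume_real_Icc_of_le (gridPt_monotone r (Nat.le_succ _)),
    Real.volume_real_Icc_of_le (gridPt_monotone r (Nat.le_succ _)), gridPt_succ_sub,
    gridPt_succ_sub]
  ring

lemma gridCell_subset_Icc (r : ℕ) (c : Fin r × Fin r) :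
    gridCell r c ⊆ Icc (-1, -1) (1, 1) := by
  have hr : 0 < r := Fin.pos c.1
  have hlo : ∀ i, -1 ≤ gridPt r i := fun i => gridPt_zero r ▸ gridPt_monotone r i.zero_le
  have hhi : ∀ i : Fin r, gridPt r (i + 1) ≤ 1 := fun i => gridPt_self hr ▸ gridPt_monotone r i.2
  rw [gridCell_eq_prod, Icc_prod_eq]
  exact prod_mono (Icc_subset_Icc (hlo _) (hhi _)) (Icc_subset_Icc (hlo _) (hhi _))

lemma sum_setIntegral_gridCell {r : ℕ} (hr : 0 < r) {f : ℝ × ℝ → ℝ}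
    (hf : IntegrableOn f (Icc (-1, -1) (1, 1))) :
    ∑ c : Fin r × Fin r, ∫ p in gridCell r c, f p = ∫ p in Icc (-1, -1) (1, 1), f p := by
  set S : Fin r → Set ℝ := fun i => Ico (gridPt r i) (gridPt r (i + 1))
  have hS : ⋃ i, S i = Ico (-1) 1 := by
    rw [iUnion_fin_Ico_eq (gridPt_monotone r), gridPt_zero, gridPt_self hr]
  have hdisj : Pairwise (Disjoint on S) :=
    (gridPt_monotone r).pairwise_disjoint_on_Ico_succ.comp_of_injective (Fin.val_injective (n := r))
  have hcell : ∀ c : Fin r × Fin r, S c.1 ×ˢ S c.2 =ᵐ[volume] gridCell r c := fun c => by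
    rw [gridCell_eq_prod, Measure.volume_eq_prod]
    exact Measure.set_prod_ae_eq Ico_ae_eq_Icc Ico_ae_eq_Icc
  have hD : ⋃ c : Fin r × Fin r, S c.1 ×ˢ S c.2 =ᵐ[volume] Icc ((-1 : ℝ), (-1 : ℝ)) (1, 1) := by
    rw [iUnion_prod, hS, Icc_prod_eq, Measure.volume_eq_prod]
    exact Measure.set_prod_ae_eq Ico_ae_eq_Icc Ico_ae_eq_Icc
  calc ∑ c, ∫ p in gridCell r c, f p = ∑ c : Fin r × Fin r, ∫ p in S c.1 ×ˢ S c.2, f p :=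
        Finset.sum_congr rfl fun c _ => (setIntegral_congr_set (hcell c)).symm
    _ = ∫ p in ⋃ c : Fin r × Fin r, S c.1 ×ˢ S c.2, f p := by
        rw [integral_iUnion (fun c => measurableSet_Ico.prod measurableSet_Ico) ?_
          (hf.congr_set_ae hD), tsum_fintype]
        intro c c' h
        rcases not_and_or.1 (mt Prod.ext_iff.2 h) with h1 | h2
        · exact disjoint_prod.2 (Or.inl (hdisj h1))
        · exact disjoint_prod.2 (Or.inr (hdisj h2))
    _ = _ := setIntegral_congr_set hD

open Classical in
lemma card_filter_gridCell_meets_not_subset_le (r : ℕ) (u v : ℝ × ℝ) :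
    #{c : Fin r × Fin r | (gridCell r c ∩ Icc u v).Nonempty ∧ ¬ gridCell r c ⊆ Icc u v}
      ≤ 4 * r := by
  set B₁ : Finset (Fin r) := {i | (Icc (gridPt r i) (gridPt r (i + 1)) ∩ Icc u.1 v.1).Nonempty ∧
      ¬ Icc (gridPt r i) (gridPt r (i + 1)) ⊆ Icc u.1 v.1}
  set B₂ : Finset (Fin r) := {j | (Icc (gridPt r j) (gridPt r (j + 1)) ∩ Icc u.2 v.2).Nonempty ∧
      ¬ Icc (gridPt r j) (gridPt r (j + 1)) ⊆ Icc u.2 v.2}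
  calc _ ≤ #(B₁ ×ˢ Finset.univ ∪ Finset.univ ×ˢ B₂) := by
        refine Finset.card_le_card fun c hc => ?_
        simp only [Finset.mem_filter, Finset.mem_univ, true_and, gridCell_eq_prod,
          Icc_prod_eq u v] at hc
        simpa [B₁, B₂] using nonempty_inter_not_subset_of_prod hc.1 hc.2
    _ ≤ 2 * r + r * 2 := by
        have h := card_filter_Icc_meets_not_subset_le_two (gridPt_monotone r) r
        refine (Finset.card_union_le _ _).trans (add_le_add ?_ ?_) <;>
          simp only [Finset.card_product, Finset.card_univ, Fintype.card_fin]
        · exact Nat.mul_le_mul_right r (h _ _)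
        · exact Nat.mul_le_mul_left r (h _ _)
    _ = 4 * r := by ring

lemma nPts_eq_natCeil (K : ℝ × ℝ → ℝ) (r : ℕ) (c : Fin r × Fin r) :
    nPts K r c = ⌈(r : ℝ) ^ 3 / 4 * ∫ p in gridCell r c, K p⌉₊ := by
  rw [nPts, cellAvg, ← mul_assoc]; ring_nf

lemma setIntegral_gridCell_le {K : ℝ × ℝ → ℝ} (hK0 : ∀ p, 0 ≤ K p) (hK1 : ∀ p, K p ≤ 1)
    (r : ℕ) (c : Fin r × Fin r) : ∫ p in gridCell r c, K p ≤ 4 / (r : ℝ) ^ 2 := by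
  have h := norm_setIntegral_le_of_norm_le_const (μ := volume) (s := gridCell r c) (f := K) (C := 1)
    (by rw [gridCell]; exact measure_Icc_lt_top)
    (fun p _ => by rw [Real.norm_of_nonneg (hK0 p)]; exact hK1 p)
  rw [one_mul, volume_real_gridCell, Real.norm_eq_abs] at h
  exact (le_abs_self _).trans h

lemma setIntegral_inter_eq_sum_gridCell {r : ℕ} (hr : 0 < r) {f : ℝ × ℝ → ℝ}
    (hf : IntegrableOn f (Icc (-1, -1) (1, 1))) {R : Set (ℝ × ℝ)} (hR : MeasurableSet R) :
    ∫ p in R ∩ Icc (-1, -1) (1, 1), f p = ∑ c : Fin r × Fin r, ∫ p in gridCell r c ∩ R, f p := by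
  simp only [← setIntegral_indicator hR]
  rw [inter_comm, ← setIntegral_indicator hR, sum_setIntegral_gridCell hr (hf.indicator hR)]

theorem grid_sampling_approximation_general
    (K : ℝ × ℝ → ℝ) (r : ℕ) (hr : 1 ≤ r)
    (hK0 : ∀ p, 0 ≤ K p) (hK1 : ∀ p, K p ≤ 1)
    (hKint : IntegrableOn K (Set.Icc ((-1 : ℝ), (-1 : ℝ)) (1, 1)))
    (htot : ∫ p in Set.Icc ((-1 : ℝ), (-1 : ℝ)) (1, 1), K p = 1)
    -- arbitrary placement of the sample points: the `k`-th point of cell `c`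
    (pts : (Fin r × Fin r) → ℕ → ℝ × ℝ)
    (hpts : ∀ c k, k < nPts K r c → pts c k ∈ gridCell r c)
    -- an axis-aligned square `R` overlapping the domain
    (a : ℝ × ℝ) (s : ℝ)
    (R : Set (ℝ × ℝ)) (hR : R = Set.Icc a (a + (s, s))) :
    ((r : ℝ) ^ 3 / 4 ≤ (∑ c, nPts K r c : ℕ) ∧
      ((∑ c, nPts K r c : ℕ) : ℝ) ≤ (r : ℝ) ^ 3 / 4 + (r : ℝ) ^ 2) ∧
    |((∑ c, {k : ℕ | k < nPts K r c ∧ pts c k ∈ R}.ncard : ℕ) : ℝ) /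
        ((∑ c, nPts K r c : ℕ) : ℝ) -
      ∫ p in R ∩ Set.Icc ((-1 : ℝ), (-1 : ℝ)) (1, 1), K p| ≤ 36 / r := by
  classical
  set V : Fin r × Fin r → ℝ := fun c => ∫ p in gridCell r c, K p
  have hV0 : ∀ c, 0 ≤ V c := fun c => integral_nonneg fun p => hK0 p
  have hVsum : ∑ c, V c = 1 := (sum_setIntegral_gridCell hr hKint).trans htot
  have hL : (0 : ℝ) < r ^ 3 / 4 := by positivity
  refine ⟨⟨?_, ?_⟩, ?_⟩
  · simpa [nPts_eq_natCeil, hVsum] using le_sum_natCeil_mul ((r : ℝ) ^ 3 / 4) V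
  · simpa [nPts_eq_natCeil, hVsum, sq] using sum_natCeil_mul_le hL.le hV0
  set B := ({c | (gridCell r c ∩ R).Nonempty ∧ ¬ gridCell r c ⊆ R} : Finset (Fin r × Fin r))
  have hB : ∑ c ∈ B, V c ≤ 4 * r * (4 / (r : ℝ) ^ 2) := by
    refine (Finset.sum_le_card_nsmul _ _ _ fun c _ => setIntegral_gridCell_le hK0 hK1 r c).trans ?_
    rw [nsmul_eq_mul]; gcongr
    exact_mod_cast hR ▸ card_filter_gridCell_meets_not_subset_le r a (a + (s, s))
  rw [setIntegral_inter_eq_sum_gridCell hr hKint (hR ▸ measurableSet_Icc), Nat.cast_sum,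
    Nat.cast_sum]
  calc _ ≤ 2 * Fintype.card (Fin r × Fin r) / ((r : ℝ) ^ 3 / 4) + ∑ c ∈ B, V c := by
        refine abs_sum_div_sum_sub_sum_le B hL hV0 hVsum (nPts_eq_natCeil K r)
          (fun c => ncard_setOf_lt_and_le _ _)
          (fun c => setIntegral_inter_nonneg_and_le hK0
            (hKint.mono_set (gridCell_subset_Icc r c)) R)
          fun c hc => ncard_and_setIntegral_inter_cases (hpts c) K (by simpa [B] using hc)
    _ ≤ 2 * (r * r) / ((r : ℝ) ^ 3 / 4) + 4 * r * (4 / (r : ℝ) ^ 2) := by simp [hB]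
    _ = 24 / r := by field_simp; ring
    _ ≤ 36 / r := by gcongr; norm_num

/-- Let `K : [-1,1]² → ℝ≥0` with total integral `1` and `K ≤ 1`.
Form the grid-based sampling `S(r)` by placing `⌈r·z(c)⌉` points (arbitrarily) in each
cell `c` of the `r × r` grid, where `z(c)` is the average of `K` on `c`. Then
`r³/4 ≤ |S(r)| ≤ r³/4 + r²`, and for every axis-aligned square `R` overlapping `[-1,1]²`,
`| |S(r) ∩ R|/|S(r)| − ∫_{R ∩ [-1,1]²} K | ≤ 36/r` (for `r ≥ 1`). -/
theorem grid_sampling_approximation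
    (K : ℝ × ℝ → ℝ) (r : ℕ) (hr : 1 ≤ r)
    (hK0 : ∀ p, 0 ≤ K p) (hK1 : ∀ p, K p ≤ 1)
    (hKint : IntegrableOn K (Set.Icc ((-1 : ℝ), (-1 : ℝ)) (1, 1)))
    (htot : ∫ p in Set.Icc ((-1 : ℝ), (-1 : ℝ)) (1, 1), K p = 1)
    -- arbitrary placement of the sample points: the `k`-th point of cell `c`
    (pts : (Fin r × Fin r) → ℕ → ℝ × ℝ)
    (hpts : ∀ c k, k < nPts K r c → pts c k ∈ gridCell r c)
    -- an axis-aligned square `R` overlapping the domain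
    (a : ℝ × ℝ) (s : ℝ) (hs : 0 < s)
    (R : Set (ℝ × ℝ)) (hR : R = Set.Icc a (a + (s, s)))
    (hover : (R ∩ Set.Icc ((-1 : ℝ), (-1 : ℝ)) (1, 1)).Nonempty) :
    ((r : ℝ) ^ 3 / 4 ≤ (∑ c, nPts K r c : ℕ) ∧
      ((∑ c, nPts K r c : ℕ) : ℝ) ≤ (r : ℝ) ^ 3 / 4 + (r : ℝ) ^ 2) ∧
    |((∑ c, {k : ℕ | k < nPts K r c ∧ pts c k ∈ R}.ncard : ℕ) : ℝ) /
        ((∑ c, nPts K r c : ℕ) : ℝ) -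
      ∫ p in R ∩ Set.Icc ((-1 : ℝ), (-1 : ℝ)) (1, 1), K p| ≤ 36 / r :=
  grid_sampling_approximation_general K r hr hK0 hK1 hKint htot pts hpts a s R hR
end
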